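/- arXiv:2008.05253 — 2 statements merged into one kernel-verified Lean document; each statement's English description precedes it below -/
import Mathlib

section
/- Let N ≥ 2g+1. For every j ∈ S₀, the polynomial F(x)^{μ(μ+1)/2} divides det Σ_j(x) in Λ[x]. -/
open Polynomial

noncomputable section

/-- The index set for the 3g+2 variables pᵢ (i ≤ 2g) and qᵢ (i ≤ g). -/
abbrev HypVars (g : ℕ) := Fin (2*g+1) ⊕ Fin (g+1)

/-- Λ = ℤ[p₀,…,p_{2g},q₀,…,q_g]. -/
abbrev Lam (g : ℕ) := MvPolynomial (HypVars g) ℤ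

/-- 𝗉(x) = x^{2g+1} + p_{2g}x^{2g} + ⋯ + p₀ ∈ Λ[x]. -/
def pUniv (g : ℕ) : Polynomial (Lam g) :=
  X ^ (2*g+1) + ∑ i : Fin (2*g+1), C (MvPolynomial.X (Sum.inl i)) * X ^ (i : ℕ)

/-- 𝗊(x) = q_gx^g + ⋯ + q₀ ∈ Λ[x]. -/
def qUniv (g : ℕ) : Polynomial (Lam g) :=
  ∑ i : Fin (g+1), C (MvPolynomial.X (Sum.inr i)) * X ^ (i : ℕ)

/-- F(x) = 𝗊(x)² + 4𝗉(x). -/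
def FUniv (g : ℕ) : Polynomial (Lam g) := qUniv g ^ 2 + 4 * pUniv g

/-- μ = ⌊(N−2g−1)/2⌋. -/
def muN (g N : ℕ) : ℕ := (N - (2*g+1)) / 2

/-- ν = ⌊N/2⌋ + 1. -/
def nuN (N : ℕ) : ℕ := N / 2 + 1

/-- C_{m,n} = ∏_{r=0}^{n−1} (m − 2r). -/
def Cc (m : ℤ) (n : ℕ) : ℤ := ∏ r ∈ Finset.range n, (m - 2*(r : ℤ))

/-- `IsUnivST g s t` says that `s i n`, `t i n` (for `n ≥ 1`) are the unique polynomials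
`s_{i,n}(x), t_{i,n}(x) ∈ Λ[x]` with
`(2y + 𝗊(x))^{2n−1} · D₁ⁿ(xⁱy) = n!(s_{i,n}(x) + t_{i,n}(x)y)` in the fraction field `L` of
`Λ[x][y]/(y² + 𝗊(x)y − 𝗉(x))`, where `D₁` is the derivation with `D₁x = 1` vanishing on `Λ`.
This is phrased by quantifying over every realization of that fraction field together with
its canonical derivation. -/
def IsUnivST (g : ℕ) (s t : ℕ → ℕ → Polynomial (Lam g)) : Prop :=
  ∀ (L : Type) [Field L], ∀ (φ : Polynomial (Lam g) →+* L) (y : L) (D : L → L),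
    Function.Injective φ →
    y ^ 2 + φ (qUniv g) * y = φ (pUniv g) →
    (∀ u v : Polynomial (Lam g), φ v * y = φ u → v = 0) →
    (∀ a b : L, D (a + b) = D a + D b) →
    (∀ a b : L, D (a * b) = a * D b + D a * b) →
    D (φ X) = 1 →
    (∀ c : Lam g, D (φ (C c)) = 0) →
    ∀ i n : ℕ, 1 ≤ n →
      (2 * y + φ (qUniv g)) ^ (2 * n - 1) * D^[n] (φ X ^ i * y)
        = (n.factorial : L) * (φ (s i n) + φ (t i n) * y)

/-- σ : Λ[x] → k[x], sending pᵢ, qᵢ to the corresponding coefficients of P, Q. -/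
def sigmaPQ (g : ℕ) {k : Type} [CommRing k] (P Q : Polynomial k) :
    Polynomial (Lam g) →+* Polynomial k :=
  Polynomial.mapRingHom (MvPolynomial.eval₂Hom (Int.castRingHom k)
    (Sum.elim (fun i : Fin (2*g+1) => P.coeff i) (fun i : Fin (g+1) => Q.coeff i)))

/-- `(x₀,y₀)` is an N-division point of `(P,Q)`: there are Φ, Ψ ∈ k[x], Ψ ≠ 0,
deg Ψ ≤ μ, deg Φ ≤ ν−1, and a branch η of the curve at x₀ with constant term y₀, such that
Φ(x₀+T) + Ψ(x₀+T)η ≡ 0 mod T^N. -/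
def IsDivisionPoint (g : ℕ) {k : Type} [Field k] (P Q : Polynomial k) (N : ℕ)
    (x₀ y₀ : k) : Prop :=
  ∃ (Φ Ψ : Polynomial k) (η : PowerSeries k),
    Ψ ≠ 0 ∧ Ψ.natDegree ≤ muN g N ∧ Φ.degree ≤ ((nuN N - 1 : ℕ) : WithBot ℕ) ∧
    PowerSeries.constantCoeff η = y₀ ∧
    η ^ 2 + ((Q.comp (C x₀ + X) : Polynomial k) : PowerSeries k) * η
      = ((P.comp (C x₀ + X) : Polynomial k) : PowerSeries k) ∧
    (PowerSeries.X : PowerSeries k) ^ N ∣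
      (((Φ.comp (C x₀ + X) : Polynomial k) : PowerSeries k)
        + ((Ψ.comp (C x₀ + X) : Polynomial k) : PowerSeries k) * η)

/-!
To learn anything about `s_{i,n}` one must exhibit a realization of the hypotheses of
`IsUnivST`. The derivation `d/dx` of `Λ[x]` extends to `K = Frac Λ[x]` (through the dual numbers
over `K`), and then to the field `L = K[y]/(y² + 𝗊y − 𝗉)`; this quadratic is irreducible because
`F = 𝗊² + 4𝗉` has odd degree `2g+1`, so is not a square in `K`.

In `L`, Leibniz' rule `Dⁿ⁺¹(x·u) = x·Dⁿ⁺¹u + (n+1)·Dⁿu`, together with `(2y + 𝗊)² = F` and the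
linear independence of `1, y` over `Λ[x]`, gives `s_{i+1,n} = x·s_{i,n} + F·s_{i,n−1}`. So
`s_i = (x + F·shift)^i s_0` in the relevant range, and the binomial theorem factors `Σ_j = B·S`
with `B_{a,k} = C(a,k) x^{a−k} F^k` lower triangular with diagonal `1, F, …, F^μ`, while
`S_{k,l} = s_{0, j_l − k}`. The bound `j_1 ≥ ν > μ` keeps every index in the range where the
recurrence holds.
-/

namespace Derivation

variable {A : Type*} [CommRing A] (M : Submonoid A) (S : Type*) [CommRing S] [Algebra A S]
  [IsLocalization M S]

open TrivSqZeroExt in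
def toDualNumber (d : Derivation ℤ A A) : A →+* DualNumber S where
  toFun a := inl (algebraMap A S a) + inr (algebraMap A S (d a))
  map_one' := by ext <;> simp
  map_mul' a b := by
    ext <;> simp only [fst_add, snd_add, fst_inl, snd_inl, fst_inr, snd_inr, fst_mul, snd_mul,
      map_mul, map_add, leibniz, smul_eq_mul, MulOpposite.smul_eq_mul_unop, MulOpposite.unop_op] <;>
      ring
  map_zero' := by ext <;> simp
  map_add' a b := by
    ext <;> simp only [fst_add, snd_add, fst_inl, snd_inl, fst_inr, snd_inr, map_add] <;> ring

noncomputable def liftDualNumber (d : Derivation ℤ A A) : S →+* DualNumber S :=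
  IsLocalization.lift (M := M) (g := toDualNumber S d) fun m =>
    TrivSqZeroExt.isUnit_iff_isUnit_fst.mpr
      (by simpa [toDualNumber] using IsLocalization.map_units S m)

variable {M S}

lemma fst_liftDualNumber (d : Derivation ℤ A A) (x : S) : (liftDualNumber M S d x).fst = x := by
  have : (TrivSqZeroExt.fstHom ℤ S S).toRingHom.comp (liftDualNumber M S d) = RingHom.id S :=
    IsLocalization.ringHom_ext M (RingHom.ext fun a => by
      simp [liftDualNumber, toDualNumber])
  exact RingHom.congr_fun this x

variable (M)

noncomputable def extendLocalization (d : Derivation ℤ A A) : Derivation ℤ S S :=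
  Derivation.mk'
    (AddMonoidHom.toIntLinearMap
      { toFun x := (liftDualNumber M S d x).snd
        map_zero' := by simp
        map_add' x y := by simp })
    fun x y => by
      simp [fst_liftDualNumber]
      ring

lemma extendLocalization_algebraMap (d : Derivation ℤ A A) (a : A) :
    extendLocalization M d (algebraMap A S a) = algebraMap A S (d a) := by
  change (liftDualNumber M S d (algebraMap A S a)).snd = _
  rw [liftDualNumber, IsLocalization.lift_eq]
  exact zero_add _

end Derivation

lemma Polynomial.not_isSquare_algebraMap_of_odd_natDegree {R K : Type*} [CommRing R] [IsDomain R]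
    [Field K] [Algebra R[X] K] [IsFractionRing R[X] K] {f : R[X]} (hf : Odd f.natDegree) :
    ¬ IsSquare (algebraMap R[X] K f) := by
  rintro ⟨e, he⟩
  obtain ⟨a, b, hb, rfl⟩ := IsFractionRing.div_surjective (A := R[X]) e
  have hb0 : b ≠ 0 := nonZeroDivisors.ne_zero hb
  have hbK : algebraMap R[X] K b ≠ 0 := IsFractionRing.to_map_ne_zero_of_mem_nonZeroDivisors hb
  have hab : f * b ^ 2 = a * a := IsFractionRing.injective R[X] K (by
    rw [map_mul, map_pow, map_mul, he]; field_simp)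
  have hf0 : f ≠ 0 := by rintro rfl; simp at hf
  have ha0 : a ≠ 0 := by rintro rfl; simp [hf0, hb0] at hab
  have := congrArg natDegree hab
  rw [natDegree_mul hf0 (pow_ne_zero _ hb0), natDegree_pow, natDegree_mul ha0 ha0] at this
  obtain ⟨k, hk⟩ := hf
  omega

open scoped Differential

lemma Differential.iterate_deriv_succ_mul_of_deriv_eq_one {A : Type*} [CommRing A] [Differential A]
    {c : A} (hc : c′ = 1) (n : ℕ) (u : A) :
    (⇑(deriv (R := A)))^[n + 1] (c * u)
      = c * (⇑(deriv (R := A)))^[n + 1] u + (n + 1) • (⇑(deriv (R := A)))^[n] u := by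
  induction n generalizing u with
  | zero => simp [Derivation.leibniz, hc]
  | succ n ih =>
    rw [Function.iterate_succ_apply' _ (n + 1), ih, map_add, Derivation.leibniz, map_nsmul, hc,
      ← Function.iterate_succ_apply' (⇑(deriv (R := A))) (n + 1),
      ← Function.iterate_succ_apply' (⇑(deriv (R := A))) n, smul_eq_mul,
      smul_eq_mul, mul_one, add_assoc, ← succ_nsmul']

section

variable (g : ℕ)

lemma natDegree_qUniv_le : (qUniv g).natDegree ≤ g :=
  natDegree_le_of_degree_le (Order.le_of_lt_succ (degree_sum_fin_lt _))

lemma natDegree_pUniv : (pUniv g).natDegree = 2 * g + 1 := by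
  rw [pUniv, natDegree_add_eq_left_of_degree_lt, natDegree_X_pow]
  exact (degree_X_pow (R := Lam g) _).symm ▸ degree_sum_fin_lt _

lemma natDegree_FUniv : (FUniv g).natDegree = 2 * g + 1 := by
  have h4p : (4 * pUniv g).natDegree = 2 * g + 1 := by
    rw [← map_ofNat (C : Lam g →+* (Lam g)[X]) 4, natDegree_C_mul (by norm_num), natDegree_pUniv]
  rw [FUniv, natDegree_add_eq_right_of_natDegree_lt, h4p]
  calc (qUniv g ^ 2).natDegree ≤ 2 * (qUniv g).natDegree := natDegree_pow_le
    _ < _ := by linarith [natDegree_qUniv_le g, h4p]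

end

namespace HyperellipticModel

variable (g : ℕ)

abbrev BaseField := FractionRing (Lam g)[X]

instance : Differential (BaseField g) :=
  ⟨Derivation.extendLocalization (nonZeroDivisors (Lam g)[X])
    ((derivative' : Derivation (Lam g) (Lam g)[X] (Lam g)[X]).restrictScalars ℤ)⟩

lemma deriv_algebraMap_baseField (u : (Lam g)[X]) :
    (algebraMap (Lam g)[X] (BaseField g) u)′ = algebraMap (Lam g)[X] (BaseField g) (derivative u) :=
  Derivation.extendLocalization_algebraMap _ _ u

def curvePoly : (BaseField g)[X] :=
  X ^ 2 + C (algebraMap _ _ (qUniv g)) * X - C (algebraMap _ _ (pUniv g))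

lemma eval₂_curvePoly {S : Type*} [CommRing S] (ψ : BaseField g →+* S) (z : S) :
    (curvePoly g).eval₂ ψ z
      = z ^ 2 + ψ (algebraMap _ _ (qUniv g)) * z - ψ (algebraMap _ _ (pUniv g)) := by
  simp [curvePoly]

lemma curvePoly_not_isRoot (r : BaseField g) : ¬ (curvePoly g).IsRoot r := by
  intro hr
  rw [IsRoot, ← eval₂_id, eval₂_curvePoly, RingHom.id_apply, RingHom.id_apply] at hr
  have hsq : (2 * r + algebraMap _ _ (qUniv g)) ^ 2 = algebraMap (Lam g)[X] _ (FUniv g) := by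
    rw [FUniv, map_add, map_mul, map_pow, map_ofNat]
    linear_combination 4 * hr
  exact not_isSquare_algebraMap_of_odd_natDegree (by simp [natDegree_FUniv])
    ⟨_, hsq.symm.trans (sq _)⟩

lemma natDegree_curvePoly : (curvePoly g).natDegree = 2 := by
  unfold curvePoly; compute_degree!

instance : Fact (curvePoly g).Monic := ⟨by unfold curvePoly; monicity!⟩

instance : Fact (Irreducible (curvePoly g)) :=
  ⟨irreducible_of_degree_le_three_of_not_isRoot (by simp [natDegree_curvePoly])
    (curvePoly_not_isRoot g)⟩

abbrev FunctionField := AdjoinRoot (curvePoly g)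

lemma algebraMap_functionField_apply (u : (Lam g)[X]) :
    algebraMap (Lam g)[X] (FunctionField g) u
      = algebraMap (BaseField g) (FunctionField g) (algebraMap (Lam g)[X] (BaseField g) u) :=
  IsScalarTower.algebraMap_apply _ _ _ u

lemma algebraMap_functionField_injective :
    Function.Injective (algebraMap (Lam g)[X] (FunctionField g)) := by
  rw [IsScalarTower.algebraMap_eq _ (BaseField g)]
  exact (algebraMap (BaseField g) _).injective.comp (IsFractionRing.injective _ _)

lemma root_sq_add_mul_root :
    AdjoinRoot.root (curvePoly g) ^ 2
        + algebraMap (Lam g)[X] (FunctionField g) (qUniv g) * AdjoinRoot.root (curvePoly g)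
      = algebraMap (Lam g)[X] (FunctionField g) (pUniv g) := by
  have h := AdjoinRoot.eval₂_root (curvePoly g)
  rw [eval₂_curvePoly, ← AdjoinRoot.algebraMap_eq, ← algebraMap_functionField_apply,
    ← algebraMap_functionField_apply] at h
  exact sub_eq_zero.mp h

lemma eq_zero_of_mul_root_eq (u v : (Lam g)[X])
    (h : algebraMap (Lam g)[X] (FunctionField g) v * AdjoinRoot.root (curvePoly g)
      = algebraMap (Lam g)[X] (FunctionField g) u) : v = 0 := by
  set k := algebraMap (Lam g)[X] (BaseField g)
  by_contra hv
  have hkv : k v ≠ 0 := (map_ne_zero_iff _ (IsFractionRing.injective _ _)).mpr hv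
  have hroot : AdjoinRoot.root (curvePoly g) = AdjoinRoot.of (curvePoly g) (k u / k v) := by
    rw [map_div₀, eq_div_iff ((_root_.map_ne_zero _).mpr hkv), mul_comm, ← AdjoinRoot.algebraMap_eq,
      ← algebraMap_functionField_apply, ← algebraMap_functionField_apply, h]
  apply curvePoly_not_isRoot g (k u / k v)
  apply (AdjoinRoot.of (curvePoly g)).injective
  rw [map_zero, ← AdjoinRoot.eval₂_root (curvePoly g), hroot, eval₂_curvePoly,
    ← eval₂_id, eval₂_curvePoly]
  simp

lemma eq_zero_of_add_mul_root_eq_zero {a b : (Lam g)[X]}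
    (h : algebraMap (Lam g)[X] (FunctionField g) a
      + algebraMap (Lam g)[X] (FunctionField g) b * AdjoinRoot.root (curvePoly g) = 0) : a = 0 := by
  obtain rfl : b = 0 := eq_zero_of_mul_root_eq g (-a) b (by rw [map_neg]; linear_combination h)
  rw [map_zero, zero_mul, add_zero] at h
  exact (map_eq_zero_iff _ (algebraMap_functionField_injective g)).mp h

instance : CharZero (FunctionField g) :=
  charZero_of_injective_algebraMap (algebraMap_functionField_injective g)

lemma deriv_algebraMap_functionField (u : (Lam g)[X]) :
    (algebraMap (Lam g)[X] (FunctionField g) u)′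
      = algebraMap (Lam g)[X] (FunctionField g) (derivative u) := by
  rw [algebraMap_functionField_apply, deriv_algebraMap, deriv_algebraMap_baseField,
    ← algebraMap_functionField_apply]

end HyperellipticModel

namespace IsUnivST

open HyperellipticModel

variable {g : ℕ} {s t : ℕ → ℕ → (Lam g)[X]}

lemma eq_in_functionField (hst : IsUnivST g s t) (i n : ℕ) (hn : 1 ≤ n) :
    (2 * AdjoinRoot.root (curvePoly g) + algebraMap (Lam g)[X] (FunctionField g) (qUniv g))
        ^ (2 * n - 1) * (⇑(Differential.deriv (R := FunctionField g)))^[n]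
          (algebraMap (Lam g)[X] (FunctionField g) X ^ i * AdjoinRoot.root (curvePoly g))
      = n.factorial * (algebraMap (Lam g)[X] (FunctionField g) (s i n)
          + algebraMap (Lam g)[X] (FunctionField g) (t i n) * AdjoinRoot.root (curvePoly g)) :=
  hst _ _ _ _ (algebraMap_functionField_injective g) (root_sq_add_mul_root g)
    (eq_zero_of_mul_root_eq g) (map_add _) (fun a b => by simp [Derivation.leibniz]; ring)
    (by rw [deriv_algebraMap_functionField, derivative_X, map_one])
    (fun c => by rw [deriv_algebraMap_functionField, derivative_C, map_zero]) i n hn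

lemma s_succ_succ (hst : IsUnivST g s t) (i m : ℕ) :
    s (i + 1) (m + 2) = X * s i (m + 2) + FUniv g * s i (m + 1) := by
  rw [← sub_eq_zero]
  apply eq_zero_of_add_mul_root_eq_zero g
    (b := t (i + 1) (m + 2) - (X * t i (m + 2) + FUniv g * t i (m + 1)))
  refine (mul_eq_zero.mp ?_).resolve_left (Nat.cast_ne_zero.mpr (m + 2).factorial_ne_zero)
  have h1 := hst.eq_in_functionField (i + 1) (m + 2) (by omega)
  have h2 := hst.eq_in_functionField i (m + 2) (by omega)
  have h3 := hst.eq_in_functionField i (m + 1) (by omega)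
  set φ := algebraMap (Lam g)[X] (FunctionField g)
  set y := AdjoinRoot.root (curvePoly g)
  set w := 2 * y + φ (qUniv g)
  have hw : w ^ 2 = φ (FUniv g) := by
    rw [FUniv, map_add, map_mul, map_pow, map_ofNat]
    linear_combination 4 * root_sq_add_mul_root g
  have hfact : ((m + 2).factorial : FunctionField g) = (m + 2) * (m + 1).factorial := by
    push_cast [Nat.factorial_succ]; ring
  rw [show 2 * (m + 2) - 1 = 2 * m + 3 by omega] at h1 h2
  rw [show 2 * (m + 1) - 1 = 2 * m + 1 by omega] at h3
  rw [show φ X ^ (i + 1) * y = φ X * (φ X ^ i * y) by ring,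
    Differential.iterate_deriv_succ_mul_of_deriv_eq_one
      (by rw [deriv_algebraMap_functionField, derivative_X, map_one]), nsmul_eq_mul] at h1
  simp only [map_sub, map_add, map_mul, ← hw]
  push_cast at h1
  -- `h1` is `x · h2` plus `(m+2) w² · h3`, as `w^(2m+3) = w² w^(2m+1)` and `(m+2)! = (m+2)(m+1)!`.
  linear_combination (-1) * h1 + φ X * h2 + (m + 2) * w ^ 2 * h3
    - w ^ 2 * (φ (s i (m + 1)) + φ (t i (m + 1)) * y) * hfact

end IsUnivST

section BinomialRecurrence

open Finset

variable {R : Type*} [CommSemiring R] (x F : R)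

def recurrenceOp : Module.End R (ℕ → R) :=
  x • LinearMap.id + F • LinearMap.funLeft R R (fun n => n - 1)

lemma funLeft_pred_pow_apply (k : ℕ) (f : ℕ → R) (n : ℕ) :
    (LinearMap.funLeft R R (fun n => n - 1) ^ k) f n = f (n - k) := by
  induction k generalizing n with
  | zero => simp
  | succ k ih => rw [pow_succ', Module.End.mul_apply, LinearMap.funLeft_apply, ih]; congr 1; omega

lemma recurrenceOp_pow_apply (i : ℕ) (f : ℕ → R) (n : ℕ) :
    (recurrenceOp x F ^ i) f n
      = ∑ k ∈ range (i + 1), i.choose k * x ^ (i - k) * F ^ k * f (n - k) := by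
  have hc : Commute (F • LinearMap.funLeft R R (fun n => n - 1)) (x • LinearMap.id) :=
    ((Commute.one_right _).smul_left F).smul_right x
  rw [recurrenceOp, add_comm, hc.add_pow, LinearMap.sum_apply, Finset.sum_apply]
  refine Finset.sum_congr rfl fun k _ => ?_
  rw [_root_.smul_pow, _root_.smul_pow]
  simp [funLeft_pred_pow_apply]
  ring

variable {x F}

lemma eq_sum_choose_of_rec {s : ℕ → ℕ → R}
    (h : ∀ i m, s (i + 1) (m + 2) = x * s i (m + 2) + F * s i (m + 1)) {i n : ℕ} (hin : i < n) :
    s i n = ∑ k ∈ range (i + 1), i.choose k * x ^ (i - k) * F ^ k * s 0 (n - k) := by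
  rw [← recurrenceOp_pow_apply]
  induction i generalizing n with
  | zero => simp
  | succ i ih =>
    obtain ⟨m, rfl⟩ : ∃ m, n = m + 2 := ⟨n - 2, by omega⟩
    rw [h, ih (by omega), ih (by omega), pow_succ', Module.End.mul_apply]
    simp [recurrenceOp]

end BinomialRecurrence

section BinomialMatrix

open Finset

variable {R : Type*} [CommRing R]

def binomialMatrix (n : ℕ) (x F : R) : Matrix (Fin n) (Fin n) R :=
  Matrix.of fun a k => (a : ℕ).choose k * x ^ ((a : ℕ) - k) * F ^ (k : ℕ)

lemma det_binomialMatrix (n : ℕ) (x F : R) :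
    (binomialMatrix (n + 1) x F).det = F ^ (n * (n + 1) / 2) := by
  have htri : (binomialMatrix (n + 1) x F).IsLowerTriangular := fun a k hka => by
    simp [binomialMatrix, Nat.choose_eq_zero_of_lt (show (a : ℕ) < k from hka)]
  rw [Matrix.det_of_isLowerTriangular _ htri]
  simp only [binomialMatrix, Matrix.of_apply, Nat.choose_self, Nat.cast_one, Nat.sub_self, pow_zero,
    one_mul]
  rw [Fin.prod_univ_eq_prod_range (F ^ ·), prod_pow_eq_pow_sum, sum_range_id, Nat.add_sub_cancel,
    mul_comm]

lemma pow_dvd_det_of_rec {s : ℕ → ℕ → R} {x F : R}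
    (h : ∀ i m, s (i + 1) (m + 2) = x * s i (m + 2) + F * s i (m + 1))
    {n : ℕ} (j : Fin (n + 1) → ℕ) (hj : ∀ l, n < j l) :
    F ^ (n * (n + 1) / 2) ∣ (Matrix.of fun a l : Fin (n + 1) => s a (j l)).det := by
  have hfac : (Matrix.of fun a l : Fin (n + 1) => s a (j l))
      = binomialMatrix (n + 1) x F * Matrix.of fun k l : Fin (n + 1) => s 0 (j l - k) := by
    ext a l
    rw [Matrix.mul_apply, Matrix.of_apply, eq_sum_choose_of_rec h (a.is_le.trans_lt (hj l))]
    simp only [binomialMatrix, Matrix.of_apply]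
    rw [Fin.sum_univ_eq_sum_range
      (fun k => (a : ℕ).choose k * x ^ ((a : ℕ) - k) * F ^ k * s 0 (j l - k))]
    refine sum_subset (range_subset_range.mpr a.is_lt) fun k _ hk => ?_
    simp [Nat.choose_eq_zero_of_lt (show (a : ℕ) < k by simpa using hk)]
  rw [hfac, Matrix.det_mul, det_binomialMatrix]
  exact dvd_mul_right _ _

end BinomialMatrix

theorem stmt8_general (g : ℕ) (s t : ℕ → ℕ → Polynomial (Lam g))
    (hst : IsUnivST g s t) (N : ℕ)
    (j : Fin (muN g N + 1) → ℕ) (hmono : StrictMono j)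
    (hlow : nuN N ≤ j 0) :
    FUniv g ^ (muN g N * (muN g N + 1) / 2) ∣
      (Matrix.of fun a l : Fin (muN g N + 1) => s (a : ℕ) (j l)).det := by
  refine pow_dvd_det_of_rec hst.s_succ_succ j fun l => ?_
  have := hmono.monotone (Fin.zero_le l)
  unfold muN nuN at *
  omega

/-- for every j ∈ S₀, F(x)^{μ(μ+1)/2} divides det Σ_j(x) in Λ[x]. -/
theorem stmt8 (g : ℕ) (hg : 1 ≤ g) (s t : ℕ → ℕ → Polynomial (Lam g))
    (hst : IsUnivST g s t) (N : ℕ) (hN : 2*g+1 ≤ N)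
    (j : Fin (muN g N + 1) → ℕ) (hmono : StrictMono j)
    (hlow : nuN N ≤ j 0) (hhigh : j (Fin.last (muN g N)) ≤ N - 1) :
    FUniv g ^ (muN g N * (muN g N + 1) / 2) ∣
      (Matrix.of fun a l : Fin (muN g N + 1) => s (a : ℕ) (j l)).det :=
  stmt8_general g s t hst N j hmono hlow
end
end

section
/- For all integers i ≥ 0 and n ≥ 1, there exists a unique pair of polynomials s(x), t(x) ∈ Λ[x] such that (2y + 𝗊(x))^{2n−1} · D₁ⁿ(xⁱy) = n! · (s(x) + t(x)·y) holds in L, where D₁ⁿ denotes the n-fold iterate of the derivation D₁. -/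
open Polynomial

noncomputable section

/-! The Taylor expansion `w ↦ ∑ₙ Dⁿw/n! Tⁿ` is a ring homomorphism `L → L⟦T⟧` (general Leibniz
rule). It sends `φ f` to `∑ₖ φ(hasseDeriv k f) Tᵏ`, which has coefficients in `S = Λ[x] + Λ[x] y`,
and `y` to a root `Y` of `Y² + 𝗊(x+T) Y = 𝗉(x+T)` with `Y₀ = y`. Writing `z = 2y + 𝗊(x)`, the
coefficient of `Tᵏ` in that equation expresses `z Yₖ` through products of lower coefficients, and
by induction `z^(2k-1) Yₖ ∈ S`. Series with this weighted integrality are closed under products, so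
the coefficient `Dⁿ(xⁱy)/n!` of the expansion of `xⁱ y` times `z^(2n-1)` lies in `S`. Uniqueness
is the linear independence of `1, y` over `Λ[x]`. -/
open Finset Nat in
theorem Derivation.iterate_map_mul {R A : Type*} [CommSemiring R] [CommSemiring A] [Algebra R A]
    (D : Derivation R A A) (n : ℕ) (a b : A) :
    D^[n] (a * b) = ∑ ij ∈ antidiagonal n, n.choose ij.1 • (D^[ij.1] a * D^[ij.2] b) := by
  induction n with
  | zero => simp
  | succ n ih =>
    rw [sum_antidiagonal_choose_succ_nsmul (fun i j => D^[i] a * D^[j] b) n]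
    simp only [Function.iterate_succ_apply', ih, map_sum, map_nsmul, Derivation.leibniz,
      smul_eq_mul, smul_add, sum_add_distrib]
    refine congrArg _ (sum_congr rfl fun ⟨i, j⟩ hij => ?_)
    rw [n.choose_symm_of_eq_add (mem_antidiagonal.1 hij).symm, mul_comm]

section TaylorSeries

variable {R K : Type*} [CommRing R] [Field K] [CharZero K] [Algebra R K]

def Derivation.taylorSeries (D : Derivation R K K) : K →+* PowerSeries K where
  toFun w := PowerSeries.mk fun n => (n.factorial : K)⁻¹ * D^[n] w
  map_one' := by
    ext (_ | n) : 1
    · simp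
    · simp [Function.iterate_succ_apply, Derivation.map_one_eq_zero, iterate_map_zero]
  map_mul' a b := by
    ext n
    simp only [PowerSeries.coeff_mk, PowerSeries.coeff_mul, D.iterate_map_mul, Finset.mul_sum]
    refine Finset.sum_congr rfl fun ⟨i, j⟩ hij => ?_
    obtain rfl := Finset.HasAntidiagonal.mem_antidiagonal.1 hij
    rw [nsmul_eq_mul, Nat.choose_symm_add, ← Nat.add_choose_mul_factorial_mul_factorial i j]
    have : ((i + j).choose j : K) ≠ 0 := Nat.cast_ne_zero.2 (Nat.choose_pos (by omega)).ne'
    push_cast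
    field_simp
  map_zero' := by ext; simp [iterate_map_zero]
  map_add' a b := by ext; simp [iterate_map_add, mul_add]

theorem Derivation.coeff_taylorSeries (D : Derivation R K K) (w : K) (n : ℕ) :
    PowerSeries.coeff n (D.taylorSeries w) = (n.factorial : K)⁻¹ * D^[n] w := by
  simp [Derivation.taylorSeries]

@[simp]
theorem Derivation.constantCoeff_taylorSeries (D : Derivation R K K) (w : K) :
    PowerSeries.constantCoeff (D.taylorSeries w) = w := by
  simpa using D.coeff_taylorSeries w 0

end TaylorSeries

theorem Derivation.map_polynomial_eq_derivative {R A K : Type*} [CommSemiring R] [CommRing A]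
    [CommRing K] [Algebra R K] (D : Derivation R K K) (φ : A[X] →+* K)
    (hX : D (φ X) = 1) (hC : ∀ c : A, D (φ (C c)) = 0) (f : A[X]) :
    D (φ f) = φ (derivative f) := by
  induction f using Polynomial.induction_on' with
  | add f g hf hg => simp only [map_add, hf, hg]
  | monomial n c =>
    simp only [← C_mul_X_pow_eq_monomial, map_mul, map_pow, D.leibniz, D.leibniz_pow, hX, hC,
      derivative_C_mul_X_pow, smul_eq_mul, nsmul_eq_mul, C_eq_natCast, _root_.map_natCast φ]
    ring

theorem Derivation.coeff_taylorSeries_map {R A K : Type*} [CommRing R] [CommRing A] [Field K]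
    [CharZero K] [Algebra R K] (D : Derivation R K K) (φ : A[X] →+* K)
    (hD : ∀ f, D (φ f) = φ (derivative f)) (f : A[X]) (n : ℕ) :
    PowerSeries.coeff n (D.taylorSeries (φ f)) = φ (hasseDeriv n f) := by
  have hiter : D^[n] (φ f) = φ (derivative^[n] f) :=
    ((Function.Semiconj.iterate_right (fun f => (hD f).symm) n) f).symm
  rw [D.coeff_taylorSeries, hiter, ← factorial_smul_hasseDeriv, LinearMap.smul_apply, map_nsmul,
    nsmul_eq_mul, inv_mul_cancel_left₀ (Nat.cast_ne_zero.2 n.factorial_ne_zero)]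

section QuadraticSubring

variable {A K : Type*} [CommRing A] [CommRing K] (φ : A →+* K) {p q : A} {y : K}

def quadraticSubring (hy : y ^ 2 + φ q * y = φ p) : Subring K where
  carrier := {w | ∃ s t, φ s + φ t * y = w}
  mul_mem' := by
    rintro _ _ ⟨s, t, rfl⟩ ⟨s', t', rfl⟩
    exact ⟨s * s' + t * t' * p, s * t' + t * s' - t * t' * q, by
      simp only [map_add, map_mul, map_sub]; linear_combination (-(φ t * φ t')) * hy⟩
  one_mem' := ⟨1, 0, by simp⟩
  add_mem' := by
    rintro _ _ ⟨s, t, rfl⟩ ⟨s', t', rfl⟩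
    exact ⟨s + s', t + t', by simp only [map_add]; ring⟩
  zero_mem' := ⟨0, 0, by simp⟩
  neg_mem' := by
    rintro _ ⟨s, t, rfl⟩
    exact ⟨-s, -t, by simp only [map_neg]; ring⟩

variable {φ}

theorem map_mem_quadraticSubring (hy : y ^ 2 + φ q * y = φ p) (a : A) :
    φ a ∈ quadraticSubring φ hy :=
  ⟨a, 0, by simp⟩

theorem mem_quadraticSubring (hy : y ^ 2 + φ q * y = φ p) : y ∈ quadraticSubring φ hy :=
  ⟨0, 1, by simp⟩

end QuadraticSubring

section WeightedCoefficients

variable {K : Type*} [CommRing K] (S : Subring K) (z : K)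

-- For `n = 0` the exponent `2 * n - 1` truncates to `0`: the constant coefficient lies in `S`.
def HasWeightedCoeffs (F : PowerSeries K) : Prop :=
  ∀ n, z ^ (2 * n - 1) * PowerSeries.coeff n F ∈ S

variable {S z}

theorem HasWeightedCoeffs.of_coeff_mem (hz : z ∈ S) {F : PowerSeries K}
    (hF : ∀ n, PowerSeries.coeff n F ∈ S) : HasWeightedCoeffs S z F :=
  fun n => S.mul_mem (S.pow_mem hz _) (hF n)

theorem HasWeightedCoeffs.mul (hz : z ∈ S) {F G : PowerSeries K} (hF : HasWeightedCoeffs S z F)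
    (hG : HasWeightedCoeffs S z G) : HasWeightedCoeffs S z (F * G) := by
  intro n
  rw [PowerSeries.coeff_mul, Finset.mul_sum]
  refine S.sum_mem fun ⟨i, j⟩ hij => ?_
  obtain rfl := Finset.HasAntidiagonal.mem_antidiagonal.1 hij
  rcases Nat.eq_zero_or_pos i with rfl | hi
  · simpa [mul_left_comm] using S.mul_mem (hF 0) (hG j)
  rcases Nat.eq_zero_or_pos j with rfl | hj
  · simpa [mul_assoc] using S.mul_mem (hF i) (hG 0)
  have : 2 * (i + j) - 1 = 1 + (2 * i - 1) + (2 * j - 1) := by omega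
  rw [this, pow_add, pow_add]
  convert S.mul_mem (S.mul_mem hz (hF i)) (hG j) using 1
  simp only [pow_one]; ring

theorem pow_mul_coeff_mul_mem_of_constantCoeff_eq_zero {F G : PowerSeries K} {n : ℕ}
    (hF0 : PowerSeries.constantCoeff F = 0) (hG0 : PowerSeries.constantCoeff G = 0)
    (hF : ∀ k < n, z ^ (2 * k - 1) * PowerSeries.coeff k F ∈ S)
    (hG : ∀ k < n, z ^ (2 * k - 1) * PowerSeries.coeff k G ∈ S) :
    z ^ (2 * n - 2) * PowerSeries.coeff n (F * G) ∈ S := by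
  rw [PowerSeries.coeff_mul, Finset.mul_sum]
  refine S.sum_mem fun ⟨i, j⟩ hij => ?_
  obtain rfl := Finset.HasAntidiagonal.mem_antidiagonal.1 hij
  rcases Nat.eq_zero_or_pos i with rfl | hi
  · simp [hF0]
  rcases Nat.eq_zero_or_pos j with rfl | hj
  · simp [hG0]
  have : 2 * (i + j) - 2 = (2 * i - 1) + (2 * j - 1) := by omega
  rw [this, pow_add]
  convert S.mul_mem (hF i (by omega)) (hG j (by omega)) using 1
  ring

theorem PowerSeries.coeff_C_mem {a : K} (ha : a ∈ S) (n : ℕ) : PowerSeries.coeff n (C a) ∈ S := by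
  rw [PowerSeries.coeff_C]
  split_ifs
  exacts [ha, S.zero_mem]

theorem hasWeightedCoeffs_of_mul_self_add_mul_eq {Y Q P : PowerSeries K} (h : Y * Y + Q * Y = P)
    (hP : ∀ n, PowerSeries.coeff n P ∈ S) (hQ : ∀ n, PowerSeries.coeff n Q ∈ S)
    (hY : PowerSeries.constantCoeff Y ∈ S) :
    HasWeightedCoeffs S (2 * PowerSeries.constantCoeff Y + PowerSeries.constantCoeff Q) Y := by
  set y := PowerSeries.constantCoeff Y
  set q := PowerSeries.constantCoeff Q
  set z := 2 * y + q
  have hq : q ∈ S := by simpa using hQ 0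
  have hz : z ∈ S := S.add_mem (S.mul_mem (natCast_mem S 2) hY) hq
  set V := Y - PowerSeries.C y
  set Q' := Q - PowerSeries.C q
  have hP0 : PowerSeries.constantCoeff P = y * y + q * y := by rw [← h]; simp [y, q]
  -- With `Y = y + V`, the coefficient `Vₙ` enters only through `z V`: in `V * (V + Q')` both
  -- factors have zero constant term.
  have hlin : PowerSeries.C z * V
      = P - PowerSeries.C (PowerSeries.constantCoeff P) - PowerSeries.C y * Q' - V * (V + Q') := by
    rw [hP0, ← h]
    simp only [V, Q', z, map_add, map_mul, map_ofNat]
    ring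
  intro n
  induction n using Nat.strong_induction_on with | _ n ih =>
  rcases n with _ | m
  · simpa using hY
  have hV : ∀ k < m + 1, z ^ (2 * k - 1) * PowerSeries.coeff k V ∈ S := fun k hk => by
    rw [map_sub, mul_sub]
    exact S.sub_mem (ih k hk) (S.mul_mem (S.pow_mem hz _) (PowerSeries.coeff_C_mem hY k))
  have hVQ : ∀ k < m + 1, z ^ (2 * k - 1) * PowerSeries.coeff k (V + Q') ∈ S := fun k hk => by
    rw [map_add, mul_add, map_sub]
    exact S.add_mem (hV k hk) (S.mul_mem (S.pow_mem hz _)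
      (S.sub_mem (hQ k) (PowerSeries.coeff_C_mem hq k)))
  have hcoeff := congrArg (PowerSeries.coeff (m + 1)) hlin
  simp only [PowerSeries.coeff_C_mul, map_sub, PowerSeries.coeff_C, if_neg m.succ_ne_zero,
    sub_zero, V, Q'] at hcoeff
  have : z ^ (2 * (m + 1) - 1) * PowerSeries.coeff (m + 1) Y
      = z ^ (2 * m) * (PowerSeries.coeff (m + 1) P - y * PowerSeries.coeff (m + 1) Q)
        - z ^ (2 * (m + 1) - 2) * PowerSeries.coeff (m + 1) (V * (V + Q')) := by
    rw [show 2 * (m + 1) - 1 = 2 * m + 1 by omega, show 2 * (m + 1) - 2 = 2 * m by omega,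
      pow_succ, mul_assoc, hcoeff]
    ring
  rw [this]
  refine S.sub_mem (S.mul_mem (S.pow_mem hz _) (S.sub_mem (hP _) (S.mul_mem hY (hQ _))))
    (pow_mul_coeff_mul_mem_of_constantCoeff_eq_zero (by simp [V, y]) (by simp [V, Q', y, q])
      hV hVQ)

end WeightedCoefficients

theorem exists_pow_mul_iterate_map_mul_eq {R A K : Type*} [CommRing R] [CommRing A] [Field K]
    [CharZero K] [Algebra R K] {φ : A[X] →+* K} {p q : A[X]} {y : K}
    (hy : y ^ 2 + φ q * y = φ p) (D : Derivation R K K) (hD : ∀ f, D (φ f) = φ (derivative f))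
    (f : A[X]) (n : ℕ) :
    ∃ s t : A[X], (2 * y + φ q) ^ (2 * n - 1) * D^[n] (φ f * y)
      = n.factorial * (φ s + φ t * y) := by
  set S := quadraticSubring φ hy
  have hcoeff : ∀ g k, PowerSeries.coeff k (D.taylorSeries (φ g)) ∈ S := fun g k => by
    rw [D.coeff_taylorSeries_map φ hD]
    exact map_mem_quadraticSubring hy _
  have hz : 2 * y + φ q ∈ S := S.add_mem
    (S.mul_mem (natCast_mem S 2) (mem_quadraticSubring hy)) (map_mem_quadraticSubring hy q)
  have hY : HasWeightedCoeffs S (2 * y + φ q) (D.taylorSeries y) := by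
    simpa using hasWeightedCoeffs_of_mul_self_add_mul_eq (Y := D.taylorSeries y)
      (Q := D.taylorSeries (φ q)) (by rw [← map_mul, ← map_mul, ← map_add, ← sq, hy])
      (hcoeff p) (hcoeff q) (by simpa using mem_quadraticSubring hy)
  obtain ⟨s, t, hst⟩ := (HasWeightedCoeffs.of_coeff_mem hz (hcoeff f)).mul hz hY n
  refine ⟨s, t, ?_⟩
  have : (n.factorial : K) ≠ 0 := Nat.cast_ne_zero.2 n.factorial_ne_zero
  rw [hst, ← map_mul, D.coeff_taylorSeries]
  field_simp

theorem eq_and_eq_of_add_mul_eq {A K : Type*} [CommRing A] [CommRing K] {φ : A →+* K} {y : K}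
    (hinj : Function.Injective φ) (hind : ∀ u v : A, φ v * y = φ u → v = 0) {s t s' t' : A}
    (h : φ s + φ t * y = φ s' + φ t' * y) : s = s' ∧ t = t' := by
  obtain rfl : t = t' :=
    sub_eq_zero.1 (hind (s' - s) (t - t') (by rw [map_sub, map_sub]; linear_combination h))
  exact ⟨hinj (add_right_cancel h), rfl⟩

theorem stmt13_general (g : ℕ)
    (L : Type) [Field L] (φ : Polynomial (Lam g) →+* L) (y : L) (D : L → L)
    (hinj : Function.Injective φ)
    (hy : y ^ 2 + φ (qUniv g) * y = φ (pUniv g))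
    (hind : ∀ u v : Polynomial (Lam g), φ v * y = φ u → v = 0)
    (hDadd : ∀ a b : L, D (a + b) = D a + D b)
    (hDmul : ∀ a b : L, D (a * b) = a * D b + D a * b)
    (hDx : D (φ X) = 1)
    (hDc : ∀ c : Lam g, D (φ (C c)) = 0)
    (i n : ℕ) :
    ∃! st : Polynomial (Lam g) × Polynomial (Lam g),
      (2 * y + φ (qUniv g)) ^ (2 * n - 1) * D^[n] (φ X ^ i * y)
        = (n.factorial : L) * (φ st.1 + φ st.2 * y) := by
  have : CharZero L := charZero_of_injective_ringHom hinj
  let D' : Derivation ℤ L L := Derivation.mk' (AddMonoidHom.mk' D hDadd).toIntLinearMap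
    fun a b => by simp [hDmul, mul_comm]
  obtain ⟨s, t, hst⟩ := exists_pow_mul_iterate_map_mul_eq hy D'
    (D'.map_polynomial_eq_derivative φ hDx hDc) (X ^ i) n
  rw [map_pow] at hst
  refine ⟨(s, t), hst, fun ⟨s', t'⟩ h' => ?_⟩
  obtain ⟨rfl, rfl⟩ := eq_and_eq_of_add_mul_eq hinj hind
    (mul_left_cancel₀ (Nat.cast_ne_zero.2 n.factorial_ne_zero) (h'.symm.trans hst))
  rfl

/-- for all i ≥ 0 and n ≥ 1, there is a unique pair (s,t) of polynomials in
Λ[x] with (2y+𝗊(x))^{2n−1}·D₁ⁿ(xⁱy) = n!(s(x)+t(x)y) in the fraction field L of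
Λ[x][y]/(y²+𝗊(x)y−𝗉(x)), where D₁ is the derivation with D₁x = 1 vanishing on Λ. -/
theorem stmt13 (g : ℕ) (hg : 1 ≤ g)
    (L : Type) [Field L] (φ : Polynomial (Lam g) →+* L) (y : L) (D : L → L)
    (hinj : Function.Injective φ)
    (hy : y ^ 2 + φ (qUniv g) * y = φ (pUniv g))
    (hind : ∀ u v : Polynomial (Lam g), φ v * y = φ u → v = 0)
    (hDadd : ∀ a b : L, D (a + b) = D a + D b)
    (hDmul : ∀ a b : L, D (a * b) = a * D b + D a * b)
    (hDx : D (φ X) = 1)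
    (hDc : ∀ c : Lam g, D (φ (C c)) = 0)
    (i n : ℕ) (hn : 1 ≤ n) :
    ∃! st : Polynomial (Lam g) × Polynomial (Lam g),
      (2 * y + φ (qUniv g)) ^ (2 * n - 1) * D^[n] (φ X ^ i * y)
        = (n.factorial : L) * (φ st.1 + φ st.2 * y) :=
  stmt13_general g L φ y D hinj hy hind hDadd hDmul hDx hDc i n
end
end
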